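/- For every n ≥ 2, no stateless realtime deterministic pushdown automaton with at most n−1 pushdown symbols accepts the language L_n = { b^k a | 1 ≤ k ≤ n−1 }. -/
import Mathlib


/-- The binary input alphabet `{a, b}`. -/
inductive Bin : Type
  | a : Bin
  | b : Bin
deriving DecidableEq

/-- The language `L_n = { b^k a | 1 ≤ k ≤ n-1 }` over `{a, b}`. -/
def Ln (n : ℕ) : Set (List Bin) :=
  {w | ∃ k, 1 ≤ k ∧ k ≤ n - 1 ∧ w = List.replicate k Bin.b ++ [Bin.a]}

/-- A stateless realtime (deterministic, no ε-moves) pushdown automaton over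
input alphabet `A`: pushdown alphabet `Γ`, partial transition function `δ`,
and an initial pushdown string `α ≠ []`. -/
structure SRPDA (A : Type) where
  Γ : Type
  [instΓ : Fintype Γ]
  δ : Γ → A → Option (List Γ)
  α : List Γ
  α_ne : α ≠ []

attribute [instance] SRPDA.instΓ

/-- `M.Steps γ w γ'` : starting with pushdown content `γ` (top of the pushdown
is the head of the list), the automaton reads the input string `w` and ends
with pushdown content `γ'`. -/
inductive SRPDA.Steps {A : Type} (M : SRPDA A) : List M.Γ → List A → List M.Γ → Prop
  | refl (γ : List M.Γ) : SRPDA.Steps M γ [] γ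
  | step {X : M.Γ} {γ w : List M.Γ} {a : A} {ws : List A} {γ' : List M.Γ} :
      M.δ X a = some w → SRPDA.Steps M (w ++ γ) ws γ' →
      SRPDA.Steps M (X :: γ) (a :: ws) γ'

/-- Acceptance by empty pushdown. -/
def SRPDA.Accepts {A : Type} (M : SRPDA A) (w : List A) : Prop :=
  M.Steps M.α w []

lemma steps_nil {A : Type} {M : SRPDA A} {γ γ' : List M.Γ}
    (h : M.Steps γ [] γ') : γ = γ' := by
  cases h; rfl

lemma steps_det {A : Type} {M : SRPDA A} {γ γ1 γ2 : List M.Γ} {w : List A}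
    (h1 : M.Steps γ w γ1) (h2 : M.Steps γ w γ2) : γ1 = γ2 := by
  induction h1 generalizing γ2 with
  | refl => exact steps_nil h2
  | step hδ _ ih =>
    cases h2 with
    | step hδ' hrest =>
      rw [hδ'] at hδ
      injection hδ with h'
      subst h'
      exact ih hrest

lemma steps_append {A : Type} {M : SRPDA A} {γ γm γ' : List M.Γ} {u v : List A}
    (h1 : M.Steps γ u γm) (h2 : M.Steps γm v γ') : M.Steps γ (u ++ v) γ' := by
  induction h1 with
  | refl => exact h2
  | step hδ _ ih => exact SRPDA.Steps.step hδ (ih h2)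

lemma steps_split {A : Type} {M : SRPDA A} {γ γ' : List M.Γ} {u v : List A}
    (h : M.Steps γ (u ++ v) γ') : ∃ γm, M.Steps γ u γm ∧ M.Steps γm v γ' := by
  induction u generalizing γ with
  | nil => exact ⟨γ, SRPDA.Steps.refl γ, h⟩
  | cons a us ih =>
    cases h with
    | step hδ hrest =>
      obtain ⟨γm, h1, h2⟩ := ih hrest
      exact ⟨γm, SRPDA.Steps.step hδ h1, h2⟩

lemma steps_pop_all {A : Type} {M : SRPDA A} {a : A} (γ : List M.Γ)
    (h : ∀ X ∈ γ, M.δ X a = some []) :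
    M.Steps γ (List.replicate γ.length a) [] := by
  induction γ with
  | nil => exact SRPDA.Steps.refl []
  | cons X γs ih =>
    simp only [List.length_cons, List.replicate_succ]
    exact SRPDA.Steps.step (h X (by simp)) (ih (fun Y hY => h Y (by simp [hY])))

theorem no_small_srpda_for_Ln' (n : ℕ) (hn : 2 ≤ n) (M : SRPDA Bin)
    (hcard : Fintype.card M.Γ ≤ n - 1)
    (h : ∀ w : List Bin, M.Steps M.α w [] ↔
      ∃ k, 1 ≤ k ∧ k ≤ n - 1 ∧ w = List.replicate k Bin.b ++ [Bin.a]) : False := by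
  have hm1 : 1 ≤ n - 1 := by omega
  have ex : ∀ k, 1 ≤ k → k ≤ n - 1 → ∃ X : M.Γ,
      M.Steps M.α (List.replicate k Bin.b) [X] ∧ M.δ X Bin.a = some [] := by
    intro k h1 h2
    have hacc : M.Steps M.α (List.replicate k Bin.b ++ [Bin.a]) [] :=
      (h _).mpr ⟨k, h1, h2, rfl⟩
    obtain ⟨γm, hs1, hs2⟩ := steps_split hacc
    cases hs2 with
    | step hδ hrest =>
      have he := steps_nil hrest
      obtain ⟨hw, hγ⟩ := List.append_eq_nil_iff.mp he
      subst hw; subst hγ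
      exact ⟨_, hs1, hδ⟩
  choose X hX1 hX2 using ex
  have hdist : ∀ i j (hi1 : 1 ≤ i) (hi2 : i ≤ n-1) (hj1 : 1 ≤ j) (hj2 : j ≤ n-1),
      i < j → X i hi1 hi2 ≠ X j hj1 hj2 := by
    intro i j hi1 hi2 hj1 hj2 hij heq
    have hm := hX1 (n-1) hm1 le_rfl
    have hsplit : List.replicate (n-1) Bin.b
        = List.replicate i Bin.b ++ List.replicate (n-1-i) Bin.b := by
      rw [← List.replicate_add]; congr 1; omega
    rw [hsplit] at hm
    obtain ⟨γmid, hA, hB⟩ := steps_split hm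
    have hmid := steps_det (hX1 i hi1 hi2) hA
    rw [← hmid, heq] at hB
    have hcomp : M.Steps M.α
        ((List.replicate j Bin.b ++ List.replicate (n-1-i) Bin.b) ++ [Bin.a]) [] := by
      refine steps_append (steps_append (hX1 j hj1 hj2) hB) ?_
      exact SRPDA.Steps.step (hX2 (n-1) hm1 le_rfl) (SRPDA.Steps.refl [])
    rw [← List.replicate_add] at hcomp
    obtain ⟨k, hk1, hk2, heqw⟩ := (h _).mp hcomp
    have hlen := congrArg List.length heqw
    simp at hlen
    omega
  let g : Fin (n-1) → M.Γ := fun k =>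
    X (k.val + 1) (Nat.le_add_left 1 _) (Nat.succ_le_of_lt k.isLt)
  have hinj : Function.Injective g := by
    intro k1 k2 heq
    by_contra hne
    rcases Nat.lt_trichotomy k1.val k2.val with hlt | heqv | hgt
    · exact hdist _ _ _ _ _ _ (by omega) heq
    · exact hne (Fin.ext heqv)
    · exact hdist _ _ _ _ _ _ (by omega) heq.symm
  have hcardeq : Fintype.card (Fin (n-1)) = Fintype.card M.Γ :=
    le_antisymm (Fintype.card_le_of_injective g hinj)
      (by rw [Fintype.card_fin]; exact hcard)
  have hsurj := ((Fintype.bijective_iff_injective_and_card g).mpr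
    ⟨hinj, hcardeq⟩).surjective
  have hall : ∀ Y : M.Γ, M.δ Y Bin.a = some [] := by
    intro Y
    obtain ⟨k, rfl⟩ := hsurj Y
    exact hX2 _ _ _
  have hpop : M.Steps M.α (List.replicate M.α.length Bin.a) [] :=
    steps_pop_all M.α (fun Y _ => hall Y)
  obtain ⟨k, hk1, hk2, heqw⟩ := (h _).mp hpop
  obtain ⟨Y, αs, hα⟩ := List.exists_cons_of_ne_nil M.α_ne
  obtain ⟨k', rfl⟩ : ∃ k', k = k' + 1 := ⟨k - 1, by omega⟩
  rw [hα] at heqw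
  simp [List.replicate_succ] at heqw

/-- For every `n ≥ 2`, no stateless realtime deterministic
pushdown automaton with at most `n - 1` pushdown symbols accepts
`L_n = { b^k a | 1 ≤ k ≤ n-1 }`. -/
theorem no_small_srpda_for_Ln (n : ℕ) (hn : 2 ≤ n) (M : SRPDA Bin)
    (hcard : Fintype.card M.Γ ≤ n - 1) :
    ¬ (∀ w : List Bin, M.Accepts w ↔ w ∈ Ln n) := by
  intro h
  exact no_small_srpda_for_Ln' n hn M hcard h
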